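/- arXiv:0706.2228 — 3 statements merged into one kernel-verified Lean document; each statement's English description precedes it below -/
import Mathlib

section
/- Let K be a field and τ the shift operator on functions Z/nZ → K. The operator 1 + τ + τ^{-1} has nontrivial kernel if and only if there exists ζ in the algebraic closure of K with ζ^n = 1 and 1 + ζ + ζ^{-1} = 0. -/
/-!
Both sides are equivalent to `(3 : K) = 0 ∨ 3 ∣ n`. A kernel element satisfies `f (x + 3) = f x`;
when `3 ∤ n` the period `3` is a unit of `ZMod n`, so `f` is constant and `3 * f 0 = 0`. When `3 ∣ n`,
any nonzero function on `ZMod 3` with zero sum pulls back to a kernel element, since on `ZMod 3` the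
three points `x, x + 1, x - 1` exhaust the group. On the other side, `1 + ζ + ζ⁻¹ = 0` means
`ζ ^ 2 + ζ + 1 = 0`, so `ζ` is a cube root of unity, and it is `1` only in characteristic `3`.
-/

open Function Polynomial

theorem one_add_add_inv_eq_zero_iff {L : Type*} [Field L] {ζ : L} :
    1 + ζ + ζ⁻¹ = 0 ↔ ζ ^ 2 + ζ + 1 = 0 := by
  rcases eq_or_ne ζ 0 with rfl | hζ
  · simp
  · have hinv := mul_inv_cancel₀ hζ
    constructor <;> intro h'
    · linear_combination ζ * h' - hinv
    · linear_combination ζ⁻¹ * h' - (1 + ζ) * hinv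

theorem three_eq_zero_or_three_dvd_of_pow_eq_one {R : Type*} [CommRing R] {ζ : R} {n : ℕ}
    (hζ : ζ ^ 2 + ζ + 1 = 0) (hn : ζ ^ n = 1) : (3 : R) = 0 ∨ 3 ∣ n := by
  have hcube : ζ ^ 3 = 1 := by linear_combination (ζ - 1) * hζ
  rcases Nat.prime_three.eq_one_or_self_of_dvd _ (orderOf_dvd_of_pow_eq_one hcube) with h | h
  · left
    rw [orderOf_eq_one_iff.mp h] at hζ
    linear_combination hζ
  · exact .inr (h ▸ orderOf_dvd_of_pow_eq_one hn)

theorem IsAlgClosed.exists_sq_add_add_one_eq_zero (L : Type*) [Field L] [IsAlgClosed L] :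
    ∃ ζ : L, ζ ^ 2 + ζ + 1 = 0 := by
  obtain ⟨ζ, hζ⟩ := IsAlgClosed.exists_root (X ^ 2 + X + 1 : L[X])
    (ne_of_eq_of_ne (by compute_degree!) two_ne_zero)
  exact ⟨ζ, by simpa using hζ⟩

theorem IsAlgClosed.exists_pow_eq_one_and_one_add_add_inv_eq_zero_iff (L : Type*) [Field L]
    [IsAlgClosed L] (n : ℕ) :
    (∃ ζ : L, ζ ^ n = 1 ∧ 1 + ζ + ζ⁻¹ = 0) ↔ (3 : L) = 0 ∨ 3 ∣ n := by
  simp only [one_add_add_inv_eq_zero_iff]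
  refine ⟨fun ⟨ζ, hn, hζ⟩ ↦ three_eq_zero_or_three_dvd_of_pow_eq_one hζ hn, ?_⟩
  rintro (h3 | ⟨m, rfl⟩)
  · exact ⟨1, one_pow _, by linear_combination h3⟩
  · obtain ⟨ζ, hζ⟩ := exists_sq_add_add_one_eq_zero L
    refine ⟨ζ, ?_, hζ⟩
    rw [pow_mul, show ζ ^ 3 = 1 by linear_combination (ζ - 1) * hζ, one_pow]

theorem periodic_three_of_add_add_sub_eq_zero {G M : Type*} [AddGroupWithOne G] [AddCommGroup M]
    {f : G → M} (hf : ∀ x, f x + f (x + 1) + f (x - 1) = 0) : Periodic f 3 := by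
  intro x
  have h₁ := hf (x + 1)
  have h₂ := hf (x + 1 + 1)
  rw [add_sub_cancel_right] at h₁ h₂
  rw [show x + 3 = x + 1 + 1 + 1 by norm_num [add_assoc]]
  linear_combination (norm := abel) h₂ - h₁

theorem ZMod.apply_eq_apply_zero_of_periodic {n : ℕ} {α : Type*} {f : ZMod n → α} {c : ZMod n}
    (hf : Periodic f c) (hc : IsUnit c) (x : ZMod n) : f x = f 0 := by
  obtain ⟨u, rfl⟩ := hc
  have hx : x = ((ZMod.cast (x * ↑u⁻¹ : ZMod n) : ℤ) : ZMod n) * u := by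
    rw [ZMod.intCast_zmod_cast, mul_assoc, Units.inv_mul, mul_one]
  rw [hx]
  exact (hf.int_mul _).eq

theorem three_eq_zero_or_three_dvd_of_add_add_sub_eq_zero {R : Type*} [CommRing R]
    [NoZeroDivisors R] {n : ℕ} {f : ZMod n → R} (hf0 : f ≠ 0)
    (hf : ∀ x, f x + f (x + 1) + f (x - 1) = 0) : (3 : R) = 0 ∨ 3 ∣ n := by
  refine or_iff_not_imp_right.mpr fun hn ↦ ?_
  have hconst : ∀ x, f x = f 0 :=
    ZMod.apply_eq_apply_zero_of_periodic (periodic_three_of_add_add_sub_eq_zero hf)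
      (by exact_mod_cast ZMod.isUnit_prime_of_not_dvd Nat.prime_three hn)
  have h3 : 3 * f 0 = 0 := by
    have := hf 0
    rw [zero_add, hconst 1, hconst (0 - 1)] at this
    linear_combination this
  refine (mul_eq_zero.mp h3).resolve_right fun h ↦ hf0 (funext fun x ↦ ?_)
  rw [hconst x, h, Pi.zero_apply]

theorem ZMod.add_add_sub_eq_sum_three {M : Type*} [AddCommMonoid M] (g : ZMod 3 → M)
    (y : ZMod 3) : g y + g (y + 1) + g (y - 1) = ∑ z, g z := by
  have huniv : (Finset.univ : Finset (ZMod 3)) = {y, y + 1, y - 1} := by revert y; decide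
  have h₁ : y ∉ ({y + 1, y - 1} : Finset (ZMod 3)) := by revert y; decide
  have h₂ : y + 1 ≠ y - 1 := by revert y; decide
  rw [huniv, Finset.sum_insert h₁, Finset.sum_pair h₂, add_assoc]

theorem exists_ne_zero_add_add_sub_eq_zero {R : Type*} [CommRing R] [Nontrivial R] {n : ℕ}
    (h : (3 : R) = 0 ∨ 3 ∣ n) :
    ∃ f : ZMod n → R, f ≠ 0 ∧ ∀ x, f x + f (x + 1) + f (x - 1) = 0 := by
  rcases h with h3 | hn
  · exact ⟨1, one_ne_zero, fun _ ↦ by simp only [Pi.one_apply]; linear_combination h3⟩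
  · set g : ZMod 3 → R := Pi.single 0 1 - Pi.single 1 1
    have hg : ∑ z, g z = 0 := by simp [g, Finset.sum_sub_distrib]
    refine ⟨g ∘ ZMod.castHom hn (ZMod 3), fun h ↦ ?_, fun x ↦ ?_⟩
    · simpa [g] using congrFun h 0
    · simp only [comp_apply, map_add, map_sub, map_one]
      rw [ZMod.add_add_sub_eq_sum_three, hg]

theorem shift_laplacian_kernel_iff_general (K : Type*) [Field K] (n : ℕ) :
    (∃ f : ZMod n → K, f ≠ 0 ∧ ∀ x : ZMod n, f x + f (x + 1) + f (x - 1) = 0) ↔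
      ∃ ζ : AlgebraicClosure K, ζ ^ n = 1 ∧ 1 + ζ + ζ⁻¹ = 0 := by
  rw [IsAlgClosed.exists_pow_eq_one_and_one_add_add_inv_eq_zero_iff,
    ← map_ofNat (algebraMap K (AlgebraicClosure K)) 3, map_eq_zero]
  exact ⟨fun ⟨_, hf0, hf⟩ ↦ three_eq_zero_or_three_dvd_of_add_add_sub_eq_zero hf0 hf,
    exists_ne_zero_add_add_sub_eq_zero⟩

theorem shift_laplacian_kernel_iff (K : Type*) [Field K] (n : ℕ) (hn : 1 ≤ n) :
    (∃ f : ZMod n → K, f ≠ 0 ∧ ∀ x : ZMod n, f x + f (x + 1) + f (x - 1) = 0) ↔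
      ∃ ζ : AlgebraicClosure K, ζ ^ n = 1 ∧ 1 + ζ + ζ⁻¹ = 0 :=
  shift_laplacian_kernel_iff_general K n
end

section
/- The linear path graph P_n with n vertices admits a nonzero F_2-valued harmonic function if and only if n ≡ 2 (mod 3). -/
/-!
Over `𝔽₂` the harmonicity condition at an inner vertex reads `h (v + 1) = h v + h (v - 1)`, so
with `h 0 = 0` a harmonic function on the path is `h 1` times the 3-periodic pattern
`0, 1, 1, 0, 1, 1, …`. The boundary condition `h (n + 1) = 0` allows `h 1 ≠ 0` exactly when
`3 ∣ n + 1`.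
-/

def notDvdThree (v : ℤ) : ZMod 2 := if 3 ∣ v then 0 else 1

lemma notDvdThree_of_dvd {v : ℤ} (hv : 3 ∣ v) : notDvdThree v = 0 := if_pos hv

lemma notDvdThree_of_not_dvd {v : ℤ} (hv : ¬ 3 ∣ v) : notDvdThree v = 1 := if_neg hv

/-- Exactly two of any three consecutive integers are not multiples of `3`. -/
lemma notDvdThree_add_add_sub (v : ℤ) :
    notDvdThree v + notDvdThree (v + 1) + notDvdThree (v - 1) = 0 := by
  unfold notDvdThree
  split_ifs <;> first | omega | decide

lemma eq_zero_of_recurrence {M : Type*} [AddCommGroup M] {d : ℤ → M} {n : ℤ}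
    (h0 : d 0 = 0) (h1 : d 1 = 0)
    (hrec : ∀ v, 1 ≤ v → v ≤ n → d v + d (v + 1) + d (v - 1) = 0) :
    ∀ k, 0 ≤ k → k ≤ n + 1 → d k = 0 := by
  have hpair : ∀ k : ℕ, (k : ℤ) ≤ n → d k = 0 ∧ d (k + 1) = 0 := by
    intro k
    induction k with
    | zero => exact fun _ ↦ by simpa using ⟨h0, h1⟩
    | succ k ih =>
      intro hk
      obtain ⟨hk0, hk1⟩ := ih (by omega)
      have hstep := hrec (k + 1) (by omega) (by omega)
      rw [add_sub_cancel_right, hk0, hk1, zero_add, add_zero] at hstep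
      exact ⟨by exact_mod_cast hk1, by push_cast; exact hstep⟩
  intro k hk0 hkn
  lift k to ℕ using hk0
  rcases k with _ | k
  · exact h0
  · by_cases hk : (k : ℤ) ≤ n
    · exact_mod_cast (hpair k hk).2
    · exact_mod_cast (hpair (k + 1) (by omega)).1

lemma eq_mul_notDvdThree_of_recurrence {h : ℤ → ZMod 2} {n : ℤ} (h0 : h 0 = 0)
    (hrec : ∀ v, 1 ≤ v → v ≤ n → h v + h (v + 1) + h (v - 1) = 0) :
    ∀ k, 0 ≤ k → k ≤ n + 1 → h k = h 1 * notDvdThree k := by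
  intro k hk0 hkn
  have hdiff := eq_zero_of_recurrence (d := fun v ↦ h v - h 1 * notDvdThree v)
    (by simp [h0, notDvdThree_of_dvd]) (by simp [notDvdThree_of_not_dvd])
    (fun v hv1 hvn ↦ by
      linear_combination hrec v hv1 hvn - h 1 * notDvdThree_add_add_sub v) k hk0 hkn
  exact sub_eq_zero.mp hdiff

lemma recurrence_of_eqOn {h g : ℤ → ZMod 2} {n : ℤ} (hhg : Set.EqOn h g (Set.Icc 0 (n + 1)))
    (hg : ∀ v, g v + g (v + 1) + g (v - 1) = 0) :
    ∀ v, 1 ≤ v → v ≤ n → h v + h (v + 1) + h (v - 1) = 0 := by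
  intro v hv1 hvn
  rw [hhg ⟨by omega, by omega⟩, hhg ⟨by omega, by omega⟩, hhg ⟨by omega, by omega⟩]
  exact hg v

theorem path_harmonic_iff_general (n : ℕ) :
    (∃ h : ℤ → ZMod 2, h ≠ 0 ∧ (∀ v : ℤ, v < 1 ∨ (n : ℤ) < v → h v = 0) ∧
      ∀ v : ℤ, 1 ≤ v → v ≤ (n : ℤ) → h v + h (v + 1) + h (v - 1) = 0) ↔ n % 3 = 2 := by
  constructor
  · rintro ⟨h, hne, hout, hrec⟩
    by_contra hmod
    have hpattern := eq_mul_notDvdThree_of_recurrence (hout 0 (by omega)) hrec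
    have h1 : h 1 = 0 := by
      have hend := hpattern (n + 1) (by omega) le_rfl
      rwa [hout (n + 1) (by omega), notDvdThree_of_not_dvd (by omega), mul_one, eq_comm] at hend
    refine hne (funext fun v ↦ ?_)
    by_cases hv : 1 ≤ v ∧ v ≤ n
    · rw [hpattern v (by omega) (by omega), h1, zero_mul, Pi.zero_apply]
    · exact hout v (by omega)
  · intro hmod
    refine ⟨(Set.Icc 1 (n : ℤ)).indicator notDvdThree, fun hzero ↦ ?_, fun v hv ↦ ?_, ?_⟩
    · have h1 := congrFun hzero 1
      rw [Set.indicator_of_mem (show (1 : ℤ) ∈ Set.Icc 1 (n : ℤ) from ⟨le_rfl, by omega⟩), notDvdThree_of_not_dvd (by omega)] at h1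
      exact one_ne_zero h1
    · exact Set.indicator_of_notMem (fun hmem ↦ by simp only [Set.mem_Icc] at hmem; omega) _
    · refine recurrence_of_eqOn (fun v hv ↦ ?_) notDvdThree_add_add_sub
      -- the two boundary vertices `0` and `n + 1` are multiples of `3`
      by_cases hmem : v ∈ Set.Icc 1 (n : ℤ)
      · exact Set.indicator_of_mem hmem _
      · rw [Set.indicator_of_notMem hmem, notDvdThree_of_dvd]
        simp only [Set.mem_Icc] at hv hmem
        omega

theorem path_harmonic_iff (n : ℕ) (hn : 1 ≤ n) :
    (∃ h : ℤ → ZMod 2, h ≠ 0 ∧ (∀ v : ℤ, v < 1 ∨ (n : ℤ) < v → h v = 0) ∧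
      ∀ v : ℤ, 1 ≤ v → v ≤ (n : ℤ) → h v + h (v + 1) + h (v - 1) = 0) ↔ n % 3 = 2 :=
  path_harmonic_iff_general n
end

section
/- With F_n, G_n the normalized Chebyshev polynomials defined by F_0=0, F_1=1, F_n = xF_{n-1} − F_{n-2} and G_0=2, G_1=x, G_n = xG_{n-1} − G_{n-2}, one has F_{mn} = F_n · (F_m ∘ G_n) in Z[x] for all m, n ≥ 0. -/
open Polynomial in
/-- Normalized Chebyshev polynomials of the second kind. -/
noncomputable def chebF : ℕ → Polynomial ℤ
  | 0 => 0
  | 1 => 1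
  | (n + 2) => X * chebF (n + 1) - chebF n

open Polynomial in
/-- Normalized Chebyshev polynomials of the first kind. -/
noncomputable def chebG : ℕ → Polynomial ℤ
  | 0 => 2
  | 1 => X
  | (n + 2) => X * chebG (n + 1) - chebG n

/-!
`chebG` and the shift `n ↦ chebF (n + 1)` are Mathlib's rescaled Chebyshev polynomials
`Polynomial.Chebyshev.C` and `Polynomial.Chebyshev.S`. For these, the product formula
`C n * S k = S (k + n) + S (k - n)` says that, for fixed `n`, the sequence `k ↦ S (k * n - 1)`
satisfies the Chebyshev recurrence with `X` replaced by `C n`; comparing initial values gives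
`S (m * n - 1) = S (n - 1) * (S (m - 1)).comp (C n)`.
-/

namespace Polynomial.Chebyshev

variable (R : Type*) [CommRing R]

theorem C_mul_S (m k : ℤ) : C R m * S R k = S R (k + m) + S R (k - m) := by
  induction m using Polynomial.Chebyshev.induct with
  | zero => simp [two_mul]
  | one => rw [C_one, S_add_one, S_sub_one]; ring
  | add_two m ih1 ih2 =>
    have h₁ := S_add_two R (k + m)
    have h₂ := S_sub_two R (k - m)
    have h₃ := C_add_two R m
    linear_combination (norm := ring_nf) S R k * h₃ - h₂ - h₁ - ih2 + (X : R[X]) * ih1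
  | neg_add_one m ih1 ih2 =>
    have h₁ := S_add_two R (k + (-m - 1))
    have h₂ := S_sub_two R (k - (-m - 1))
    have h₃ := C_add_two R (-m - 1)
    linear_combination (norm := ring_nf) S R k * h₃ - h₂ - h₁ - ih2 + (X : R[X]) * ih1

theorem S_mul_sub_one (m n : ℤ) :
    S R (m * n - 1) = S R (n - 1) * (S R (m - 1)).comp (C R n) := by
  induction m using Polynomial.Chebyshev.induct with
  | zero => simp
  | one => simp
  | add_two m ih1 ih2 =>
    have h₁ := C_mul_S R n ((m + 1) * n - 1)
    have h₂ := congr_arg (comp · (C R n)) <| S_add_two R (m - 1)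
    simp only [sub_comp, mul_comp, X_comp] at h₂
    linear_combination (norm := ring_nf) -h₁ + C R n * ih1 - ih2 - S R (n - 1) * h₂
  | neg_add_one m ih1 ih2 =>
    have h₁ := C_mul_S R n ((-m) * n - 1)
    have h₂ := congr_arg (comp · (C R n)) <| S_add_two R (-m - 2)
    simp only [sub_comp, mul_comp, X_comp] at h₂
    linear_combination (norm := ring_nf) -h₁ + C R n * ih1 - ih2 - S R (n - 1) * h₂

end Polynomial.Chebyshev

open Polynomial Chebyshev

theorem chebG_eq_C (n : ℕ) : chebG n = C ℤ n := by
  induction n using Nat.twoStepInduction with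
  | zero => simp [chebG]
  | one => simp [chebG]
  | more n ih₀ ih₁ =>
    rw [chebG, ih₀, ih₁]
    push_cast
    exact (C_add_two ℤ n).symm

theorem chebF_eq_S (n : ℕ) : chebF n = S ℤ (n - 1) := by
  induction n using Nat.twoStepInduction with
  | zero => simp [chebF]
  | one => simp [chebF]
  | more n ih₀ ih₁ =>
    rw [chebF, ih₀, ih₁]
    push_cast
    linear_combination (norm := ring_nf) -(S_add_two ℤ (n - 1))

theorem chebF_mul_index (m n : ℕ) :
    chebF (m * n) = chebF n * (chebF m).comp (chebG n) := by
  rw [chebF_eq_S, chebF_eq_S, chebF_eq_S, chebG_eq_C]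
  push_cast
  exact S_mul_sub_one ℤ m n
end
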